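/- arXiv:2309.06696 — 2 statements merged into one kernel-verified Lean document; each statement's English description precedes it below -/
import Mathlib

section
/- For all integers f ≥ 2 and d ≥ 1, let G be the Hamming graph whose vertex set is {1,…,f}^d, with two d-tuples adjacent if and only if they agree in all but exactly one coordinate. Then the only f-FD connectivity certificate of G is G itself; in particular, every f-FD connectivity certificate of G has exactly n·(f−1)·d/2 edges, where n = f^d. -/
open SimpleGraph

/-- `F` has faulty-degree at most `f`: every vertex is incident to at most `f` edges of `F`. -/
def DegLE {V : Type} (F : Set (Sym2 V)) (f : ℕ) : Prop :=
  ∀ v : V, {e ∈ F | v ∈ e}.ncard ≤ f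

/-- `H` is an `f`-faulty-degree connectivity certificate of `G`. -/
def IsFDCertificate {V : Type} (G H : SimpleGraph V) (f : ℕ) : Prop :=
  H ≤ G ∧ ∀ F : Set (Sym2 V), F ⊆ G.edgeSet → DegLE F f →
    ∀ u v : V, ((H.deleteEdges F).Reachable u v ↔ (G.deleteEdges F).Reachable u v)

/-- The Hamming graph on `{1,…,f}^d`: two tuples are adjacent iff they differ in exactly
one coordinate. -/
def hammingGraph (f d : ℕ) : SimpleGraph (Fin d → Fin f) where
  Adj x y := ∃! i : Fin d, x i ≠ y i
  symm := by
    constructor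
    rintro x y ⟨i, hi, hu⟩
    exact ⟨i, fun h => hi h.symm, fun j hj => hu j (fun h => hj h.symm)⟩
  loopless := by
    constructor
    rintro x ⟨i, hi, -⟩
    exact hi rfl

open Function

/-!
Fix an edge `xy` of the Hamming graph and a coordinate `i` where `x` and `y` differ. At every
vertex `v`, the edges leaving the cut `{z | z i = x i}` all join `v` to some `update v i b`, so
there are fewer than `f` of them. Failing every cut edge except `xy` is therefore an admissible
fault set, after which `xy` is the only edge between `x` and `y`'s sides; so a certificate keeps
`xy`. The edge count follows because the Hamming graph is `d (f - 1)`-regular.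
-/

section Certificates

variable {V : Type}

def SimpleGraph.cutEdges (G : SimpleGraph V) (S : Set V) : Set (Sym2 V) :=
  {e ∈ G.edgeSet | ∃ u ∈ S, ∃ w ∉ S, e = s(u, w)}

lemma DegLE.mono [Finite V] {F F' : Set (Sym2 V)} {f : ℕ} (hF' : DegLE F' f) (hFF' : F ⊆ F') :
    DegLE F f := fun v =>
  (hF' v).trans' (Set.ncard_le_ncard fun _ he => ⟨hFF' he.1, he.2⟩)

theorem IsFDCertificate.adj_of_degLE_cutEdges [Finite V] {G H : SimpleGraph V} {f : ℕ}
    (hH : IsFDCertificate G H f) {S : Set V} (hS : DegLE (G.cutEdges S) f) {x y : V}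
    (hxy : G.Adj x y) (hx : x ∈ S) (hy : y ∉ S) : H.Adj x y := by
  set F := G.cutEdges S \ {s(x, y)}
  have hGF : (G.deleteEdges F).Adj x y := by simp [F, hxy]
  obtain ⟨p⟩ := (hH.2 F (fun e he => he.1.1) (hS.mono Set.sdiff_subset) x y).2 hGF.reachable
  obtain ⟨d, -, hd, hd'⟩ := p.exists_boundary_dart S hx hy
  obtain ⟨hHd, hdF⟩ := (deleteEdges_adj ..).1 d.adj
  have hd_cut : s(d.fst, d.snd) ∈ G.cutEdges S := ⟨hH.1 hHd, d.fst, hd, d.snd, hd', rfl⟩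
  have hd_eq : s(d.fst, d.snd) = s(x, y) := by_contra fun h => hdF ⟨hd_cut, h⟩
  rw [← mem_edgeSet, ← hd_eq]
  exact hHd

theorem SimpleGraph.IsRegularOfDegree.ncard_edgeSet [Fintype V] {G : SimpleGraph V}
    [DecidableRel G.Adj] {k : ℕ} (h : G.IsRegularOfDegree k) :
    G.edgeSet.ncard = Fintype.card V * k / 2 := by
  have hsum := G.sum_degrees_eq_twice_card_edges
  simp only [h.degree_eq, Finset.sum_const, Finset.card_univ, smul_eq_mul] at hsum
  rw [← coe_edgeFinset, Set.ncard_coe_finset]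
  omega

end Certificates

section Hamming

variable {f d : ℕ}

lemma hammingGraph_adj_update_iff {u : Fin d → Fin f} {i : Fin d} {b : Fin f} :
    (hammingGraph f d).Adj u (update u i b) ↔ b ≠ u i := by
  constructor
  · rintro ⟨j, hj, -⟩ rfl
    simp at hj
  · intro hb
    refine ⟨i, by simpa using hb.symm, fun j hj => ?_⟩
    by_contra hji
    exact hj (update_of_ne hji ..).symm

lemma eq_update_of_hammingGraph_adj {u w : Fin d → Fin f} {i : Fin d}
    (h : (hammingGraph f d).Adj u w) (hi : u i ≠ w i) : w = update u i (w i) := by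
  obtain ⟨j, -, hj⟩ := h
  refine eq_update_iff.2 ⟨rfl, fun k hk => ?_⟩
  by_contra hne
  exact hk ((hj k (Ne.symm hne)).trans (hj i hi).symm)

lemma degLE_cutEdges_hammingGraph (i : Fin d) (a : Fin f) :
    DegLE ((hammingGraph f d).cutEdges {z | z i = a}) f := by
  intro v
  have hsub : {e ∈ (hammingGraph f d).cutEdges {z | z i = a} | v ∈ e} ⊆
      Set.range fun b : Fin f => s(v, update v i b) := by
    rintro e ⟨⟨huw, u, hu, w, hw, rfl⟩, hv⟩
    rw [mem_edgeSet] at huw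
    have hi : u i ≠ w i := fun h => hw (h.symm.trans hu)
    rcases Sym2.mem_iff.1 hv with rfl | rfl
    · exact ⟨w i, congrArg _ (eq_update_of_hammingGraph_adj huw hi).symm⟩
    · refine ⟨u i, ?_⟩
      rw [Sym2.eq_swap]
      exact congrArg _ (eq_update_of_hammingGraph_adj huw.symm hi.symm).symm
  have hinj : Injective fun b : Fin f => s(v, update v i b) := fun b c h =>
    update_injective v i (Sym2.congr_right.1 h)
  calc _ ≤ (Set.range fun b : Fin f => s(v, update v i b)).ncard := Set.ncard_le_ncard hsub
    _ = f := by rw [Set.ncard_range_of_injective hinj, Nat.card_eq_fintype_card, Fintype.card_fin]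

theorem eq_hammingGraph_of_isFDCertificate {H : SimpleGraph (Fin d → Fin f)}
    (hH : IsFDCertificate (hammingGraph f d) H f) : H = hammingGraph f d := by
  refine le_antisymm hH.1 fun x y hxy => ?_
  obtain ⟨i, hi⟩ := hxy.exists
  exact hH.adj_of_degLE_cutEdges (degLE_cutEdges_hammingGraph i (x i)) hxy rfl (Ne.symm hi)

noncomputable def hammingGraph_neighborSetEquiv (v : Fin d → Fin f) :
    (Σ i : Fin d, {b : Fin f // b ≠ v i}) ≃ (hammingGraph f d).neighborSet v := by
  refine Equiv.ofBijective (fun p => ⟨update v p.1 p.2, hammingGraph_adj_update_iff.2 p.2.2⟩)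
    ⟨?_, fun ⟨w, hw⟩ => ?_⟩
  · rintro ⟨i, b, hb⟩ ⟨j, c, hc⟩ h
    have h' : update v i b = update v j c := congrArg Subtype.val h
    obtain rfl : i = j := by
      by_contra hij
      exact hb (by simpa [update_of_ne hij] using congrFun h' i)
    obtain rfl : b = c := update_injective v i h'
    rfl
  · obtain ⟨i, hi⟩ := hw.exists
    exact ⟨⟨i, w i, Ne.symm hi⟩, Subtype.ext (eq_update_of_hammingGraph_adj hw hi).symm⟩

lemma hammingGraph_isRegularOfDegree [DecidableRel (hammingGraph f d).Adj] :
    (hammingGraph f d).IsRegularOfDegree (d * (f - 1)) := fun v => by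
  rw [← card_neighborSet_eq_degree, ← Fintype.card_congr (hammingGraph_neighborSetEquiv v),
    Fintype.card_sigma]
  simp [Fintype.card_subtype_compl]

lemma ncard_edgeSet_hammingGraph :
    (hammingGraph f d).edgeSet.ncard = f ^ d * (f - 1) * d / 2 := by
  classical
  rw [hammingGraph_isRegularOfDegree.ncard_edgeSet, Fintype.card_fun, Fintype.card_fin,
    Fintype.card_fin, mul_comm d, mul_assoc]

end Hamming

theorem hamming_fd_certificate_lower_bound_general (f d : ℕ)
    (H : SimpleGraph (Fin d → Fin f)) (hcert : IsFDCertificate (hammingGraph f d) H f) :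
    H = hammingGraph f d ∧ H.edgeSet.ncard = f ^ d * (f - 1) * d / 2 := by
  obtain rfl := eq_hammingGraph_of_isFDCertificate hcert
  exact ⟨rfl, ncard_edgeSet_hammingGraph⟩

/-- For `f ≥ 2`, `d ≥ 1`, the only `f`-FD connectivity certificate of the
Hamming graph is the graph itself; in particular every such certificate has exactly
`n·(f−1)·d/2` edges, where `n = f^d`. -/
theorem hamming_fd_certificate_lower_bound (f d : ℕ) (hf : 2 ≤ f) (hd : 1 ≤ d)
    (H : SimpleGraph (Fin d → Fin f)) (hcert : IsFDCertificate (hammingGraph f d) H f) :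
    H = hammingGraph f d ∧ H.edgeSet.ncard = f ^ d * (f - 1) * d / 2 :=
  hamming_fd_certificate_lower_bound_general f d H hcert
end

section
/- There exists an absolute constant A > 0 such that the following holds. Let H be an n-vertex graph with a strict linear order < on E(H) and an f-FD 2k-blocking set (F_e)_{e∈E(H)}, let C ≥ 1 be a parameter, and suppose every vertex of H has degree at most Δ. Then the number of walks in H with exactly k pairwise distinct edges that are chain-blocked is at most k·n·(A·Δ)^k / C. -/
open SimpleGraph

/-- `lt` is a strict linear order on the edges of `H`. -/
def IsEdgeOrder {V : Type} (H : SimpleGraph V) (lt : Sym2 V → Sym2 V → Prop) : Prop :=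
  (∀ e ∈ H.edgeSet, ¬ lt e e) ∧
  (∀ e₁ ∈ H.edgeSet, ∀ e₂ ∈ H.edgeSet, ∀ e₃ ∈ H.edgeSet, lt e₁ e₂ → lt e₂ e₃ → lt e₁ e₃) ∧
  (∀ e₁ ∈ H.edgeSet, ∀ e₂ ∈ H.edgeSet, e₁ ≠ e₂ → lt e₁ e₂ ∨ lt e₂ e₁)

/-- `Fb` is an `f`-FD `k`-blocking set for `H` with respect to the edge order `lt`:
each edge `e` gets a set `Fb e` of earlier edges of `H` with faulty-degree at most `f`,
and every cycle with at most `k` edges is "blocked" at its latest edge. -/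
def IsFDBlockingSet {V : Type} (H : SimpleGraph V) (lt : Sym2 V → Sym2 V → Prop)
    (f k : ℕ) (Fb : Sym2 V → Set (Sym2 V)) : Prop :=
  (∀ e ∈ H.edgeSet, Fb e ⊆ H.edgeSet) ∧
  (∀ e ∈ H.edgeSet, ∀ v : V, {e' ∈ Fb e | v ∈ e'}.ncard ≤ f) ∧
  (∀ e ∈ H.edgeSet, ∀ e' ∈ Fb e, lt e' e) ∧
  (∀ (v : V) (p : H.Walk v v), p.IsCycle → p.length ≤ k →
    ∀ e ∈ p.edges, (∀ e' ∈ p.edges, e' ≠ e → lt e' e) →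
      ∃ e' ∈ Fb e, e' ∈ p.edges)

/-- A walk is *chain-unblocked (with bound `b`)* if for every edge of the walk, at most `b`
edges `e` of `H` have that edge in `Fb e` and are incident to a vertex of the walk that
strictly follows that edge along the walk. -/
def ChainUnblocked {V : Type} (H : SimpleGraph V) (Fb : Sym2 V → Set (Sym2 V))
    (b : ℝ) {u v : V} (p : H.Walk u v) : Prop :=
  ∀ i : Fin p.edges.length,
    ({e ∈ H.edgeSet | p.edges.get i ∈ Fb e ∧
        ∃ x ∈ p.support.drop ((i : ℕ) + 2), x ∈ e}.ncard : ℝ) ≤ b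

/-! Fix `i < k` and call an edge `e ∈ H` a blocker of the `i`-th edge `vᵢvᵢ₊₁` of a walk
`v₀ … v_k` if `vᵢvᵢ₊₁ ∈ F_e` and `e` contains some `vⱼ` with `j > i + 1`. A pair (walk, blocker)
is determined by `j ≤ k`, the vertex `vⱼ`, the other endpoint of `e`, the walk `vⱼ, vⱼ₋₁, …, v₀`
and the walk `vⱼ, …, v_k`. Each step of the two walks has at most `Δ` choices, except the step
from `vᵢ₊₁` to `vᵢ`, which has at most `f` because `vᵢvᵢ₊₁` is one of the at most `f` edges of
`F_e` at `vᵢ₊₁`. So there are at most `k n f Δ^k` such pairs, and since a walk chain-blocked at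
`i` has more than `C f k` blockers, at most `n Δ^k / C` walks are chain-blocked at `i`. Summing
over `i` gives the bound with `A = 1`. -/

namespace Set

variable {α β : Type*}

theorem encard_le_encard_mul_of_mapsTo {s : Set α} {t : Set β} {g : α → β} {m : ℕ∞}
    (hg : MapsTo g s t) (hm : ∀ b ∈ t, {a ∈ s | g a = b}.encard ≤ m) :
    s.encard ≤ t.encard * m := by
  rcases t.finite_or_infinite with ht | ht
  · calc s.encard = (⋃ b ∈ ht.toFinset, {a ∈ s | g a = b}).encard := by
          congr 1; ext a; simpa using fun ha => hg ha
      _ ≤ ∑ b ∈ ht.toFinset, {a ∈ s | g a = b}.encard := Finset.set_encard_biUnion_le _ _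
      _ ≤ ∑ _b ∈ ht.toFinset, m := Finset.sum_le_sum fun b hb => hm b (by simpa using hb)
      _ = t.encard * m := by simp [ht.encard_eq_coe_toFinset_card]
  · rcases eq_or_ne m 0 with rfl | hm0
    · refine (encard_eq_zero.2 (eq_empty_of_forall_notMem fun a ha => ?_)).trans_le bot_le
      have := encard_eq_zero.1 (nonpos_iff_eq_zero.1 (hm (g a) (hg ha)))
      exact this.subset ⟨ha, rfl⟩
    · simp [ht.encard_eq, ENat.top_mul hm0]

theorem Finite.encard_mul_le_encard_prod {s : Set α} {E : α → Set β} {m : ℕ∞}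
    (hs : s.Finite) (hm : ∀ a ∈ s, m ≤ (E a).encard) :
    s.encard * m ≤ {z : α × β | z.1 ∈ s ∧ z.2 ∈ E z.1}.encard := by
  have hunion : {z : α × β | z.1 ∈ s ∧ z.2 ∈ E z.1} = ⋃ a ∈ s, Prod.mk a '' E a := by
    ext ⟨a, b⟩
    simp [and_comm]
  have hdisj : s.PairwiseDisjoint fun a => Prod.mk a '' E a := by
    intro a _ a' _ haa'
    simp only [Function.onFun, disjoint_left, mem_image]
    rintro _ ⟨b, -, rfl⟩ ⟨b', -, h⟩
    exact haa' (congrArg Prod.fst h).symm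
  rw [hunion, hs.encard_biUnion hdisj, finsum_mem_eq_finite_toFinset_sum _ hs,
    hs.encard_eq_coe_toFinset_card, ← nsmul_eq_mul]
  refine Finset.card_nsmul_le_sum _ _ _ fun a ha => ?_
  rw [(Prod.mk_right_injective a).encard_image]
  exact hm a (by simpa using ha)

end Set

namespace SimpleGraph

variable {V : Type*} {G : SimpleGraph V}

theorem Walk.sigma_support_injective :
    Function.Injective fun x : Σ u v, G.Walk u v => x.2.2.support := by
  rintro ⟨u, v, p⟩ ⟨u', v', q⟩ (h : p.support = q.support)
  obtain rfl : u = u' := by simpa [h] using p.head_support.symm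
  obtain rfl : v = v' := by simpa [h] using p.getLast_support.symm
  rw [Walk.ext_support h]

theorem Walk.support_eq_take_append_drop {u v : V} (p : G.Walk u v) (n : ℕ) :
    p.support = (p.take n).support ++ (p.drop n).support.tail := by
  conv_lhs => rw [← p.append_take_drop_eq n]
  exact Walk.support_append _ _

theorem finite_setOf_walk_length [Finite V] (k : ℕ) :
    {x : Σ u v, G.Walk u v | x.2.2.length = k}.Finite := by
  refine ((List.finite_length_eq V (k + 1)).preimage Walk.sigma_support_injective.injOn).subset ?_
  intro x hx
  simp [hx]

theorem encard_walk_length_succ_le {u : V} {n : ℕ} {P : (Σ v, G.Walk u v) → Prop}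
    {t : Set V} {m : ℕ∞}
    (ht : ∀ q : Σ v, G.Walk u v, q.2.length = n + 1 → P q → q.2.snd ∈ t)
    (hm : ∀ w ∈ t, ∀ hw : G.Adj u w,
      {q : Σ v, G.Walk w v | q.2.length = n ∧ P ⟨q.1, .cons hw q.2⟩}.encard ≤ m) :
    {q : Σ v, G.Walk u v | q.2.length = n + 1 ∧ P q}.encard ≤ t.encard * m := by
  refine Set.encard_le_encard_mul_of_mapsTo (g := fun q => q.2.snd)
    (fun q hq => ht q hq.1 hq.2) fun w hw => ?_
  by_cases hadj : G.Adj u w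
  · refine le_trans (Set.encard_le_encard ?_)
      ((Set.encard_image_le (fun q => ⟨q.1, .cons hadj q.2⟩) _).trans (hm w hw hadj))
    rintro ⟨v, _ | ⟨h, p⟩⟩ ⟨⟨hlen, hP⟩, hsnd⟩
    · simp at hlen
    · simp only [Walk.snd_cons] at hsnd
      subst hsnd
      exact ⟨⟨v, p⟩, ⟨by simpa using hlen, hP⟩, rfl⟩
  · refine (Set.encard_eq_zero.2 (Set.eq_empty_of_forall_notMem ?_)).trans_le bot_le
    rintro ⟨v, p⟩ ⟨⟨hlen, -⟩, rfl⟩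
    exact hadj (Walk.adj_snd (by simp [← Walk.length_eq_zero_iff, hlen]))

variable {Δ : ℕ}

theorem encard_walk_length_le (hΔ : ∀ v, (G.neighborSet v).encard ≤ Δ) (u : V) (n : ℕ) :
    {q : Σ v, G.Walk u v | q.2.length = n}.encard ≤ Δ ^ n := by
  induction n generalizing u with
  | zero =>
    refine Set.encard_le_one_iff.2 ?_ |>.trans_eq (pow_zero _).symm
    rintro ⟨v, _ | _⟩ ⟨v', _ | _⟩ hp hp' <;> simp_all
  | succ n ih =>
    calc _ = {q : Σ v, G.Walk u v | q.2.length = n + 1 ∧ True}.encard := by simp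
      _ ≤ (G.neighborSet u).encard * Δ ^ n :=
          encard_walk_length_succ_le
            (fun q hq _ => Walk.adj_snd (by simp [← Walk.length_eq_zero_iff, hq]))
            fun w _ _ => by simpa using ih w
      _ ≤ Δ ^ (n + 1) := by rw [pow_succ']; gcongr; exact hΔ u

theorem encard_walk_length_succ_edge_mem_le {B : Set (Sym2 V)} {f : ℕ}
    (hB : ∀ v, {e ∈ B | v ∈ e}.encard ≤ f) (hΔ : ∀ v, (G.neighborSet v).encard ≤ Δ)
    {r n : ℕ} (hrn : r ≤ n) (u : V) :
    {q : Σ v, G.Walk u v | q.2.length = n + 1 ∧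
      s(q.2.getVert r, q.2.getVert (r + 1)) ∈ B}.encard ≤ f * Δ ^ n := by
  induction r generalizing u n with
  | zero =>
    have hfirst : {w | s(u, w) ∈ B}.encard ≤ f := by
      refine (Set.encard_le_encard_of_injOn (f := fun w => s(u, w)) ?_ ?_).trans (hB u)
      · exact fun w hw => ⟨hw, Sym2.mem_mk_left _ _⟩
      · exact fun w _ w' _ h => Sym2.congr_right.1 h
    calc _ ≤ {w | s(u, w) ∈ B}.encard * Δ ^ n :=
          encard_walk_length_succ_le (fun q _ hq => by simpa [Walk.snd] using hq) fun w _ _ =>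
            (Set.encard_le_encard fun q hq => hq.1).trans (encard_walk_length_le hΔ w n)
      _ ≤ f * Δ ^ n := by gcongr
  | succ r ih =>
    obtain ⟨n, rfl⟩ : ∃ n', n = n' + 1 := ⟨n - 1, by omega⟩
    calc _ ≤ (G.neighborSet u).encard * (f * Δ ^ n) :=
          encard_walk_length_succ_le
            (fun q hq _ => Walk.adj_snd (by simp [← Walk.length_eq_zero_iff, hq]))
            fun w _ _ => by simpa [Walk.getVert_cons_succ] using ih (by omega) w
      _ ≤ Δ * (f * Δ ^ n) := by gcongr; exact hΔ u
      _ = f * Δ ^ (n + 1) := by ring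

/-- Cutting the walk at its `j`-th vertex `w` gives two walks from `w`: the reversed initial part,
whose `(j - 1 - i)`-th edge lies in `B`, and the final part. -/
theorem encard_walk_getVert_eq_edge_mem_le {B : Set (Sym2 V)} {f : ℕ}
    (hB : ∀ v, {e ∈ B | v ∈ e}.encard ≤ f) (hΔ : ∀ v, (G.neighborSet v).encard ≤ Δ)
    {i j k : ℕ} (hij : i < j) (hjk : j ≤ k) (w : V) :
    {x : Σ u v, G.Walk u v | x.2.2.length = k ∧ x.2.2.getVert j = w ∧
      s(x.2.2.getVert i, x.2.2.getVert (i + 1)) ∈ B}.encard ≤ f * Δ ^ (k - 1) := by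
  obtain ⟨r, rfl⟩ := Nat.exists_eq_add_of_lt hij
  set A := {q : Σ a, G.Walk w a | q.2.length = i + r + 1 ∧
    s(q.2.getVert r, q.2.getVert (r + 1)) ∈ B}
  set D := {q : Σ b, G.Walk w b | q.2.length = k - (i + r + 1)}
  set cut := fun x : Σ u v, G.Walk u v =>
    ((x.2.2.take (i + r + 1)).reverse.support, (x.2.2.drop (i + r + 1)).support)
  have hcut : Set.MapsTo cut
      {x | x.2.2.length = k ∧ x.2.2.getVert (i + r + 1) = w ∧
        s(x.2.2.getVert i, x.2.2.getVert (i + 1)) ∈ B}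
      (((fun q => q.2.support) '' A) ×ˢ ((fun q => q.2.support) '' D)) := by
    rintro ⟨u, v, p⟩ ⟨hk : p.length = k, rfl, hedge⟩
    refine ⟨⟨⟨u, (p.take _).reverse⟩, ⟨?_, ?_⟩, rfl⟩, ⟨⟨v, p.drop _⟩, ?_, rfl⟩⟩
    · simp [hk, hjk]
    · have h1 : i + r + 1 - r = i + 1 := by omega
      have h2 : i + r + 1 - (r + 1) = i := by omega
      have h3 : min (i + r + 1) i = i := by omega
      have h4 : min (i + r + 1) (i + 1) = i + 1 := by omega
      simpa [Walk.getVert_reverse, hk, hjk, h1, h2, h3, h4, Sym2.eq_swap] using hedge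
    · exact (Walk.drop_length p _).trans (by rw [hk])
  have hinj : Function.Injective cut := by
    intro x y hxy
    simp only [cut, Prod.mk.injEq, Walk.support_reverse, List.reverse_inj] at hxy
    refine Walk.sigma_support_injective ?_
    dsimp only
    rw [Walk.support_eq_take_append_drop x.2.2 (i + r + 1),
      Walk.support_eq_take_append_drop y.2.2 (i + r + 1), hxy.1, hxy.2]
  calc _ ≤ (((fun q => q.2.support) '' A) ×ˢ ((fun q => q.2.support) '' D)).encard :=
        Set.encard_le_encard_of_injOn hcut hinj.injOn
    _ ≤ A.encard * D.encard := by
        rw [Set.encard_prod]; gcongr <;> exact Set.encard_image_le _ _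
    _ ≤ (f * Δ ^ (i + r)) * Δ ^ (k - (i + r + 1)) := by
        gcongr
        · exact encard_walk_length_succ_edge_mem_le hB hΔ (by omega) w
        · exact encard_walk_length_le hΔ w _
    _ = f * Δ ^ (k - 1) := by rw [mul_assoc, ← pow_add]; congr 2; omega

theorem encard_incidenceSet_le (hΔ : ∀ v, (G.neighborSet v).encard ≤ Δ) (v : V) :
    (G.incidenceSet v).encard ≤ Δ := by
  classical
  exact (Set.encard_congr (G.incidenceSetEquivNeighborSet v)).trans_le (hΔ v)

theorem encard_walk_edge_mem_getVert_mem_le {Fb : Sym2 V → Set (Sym2 V)} {f : ℕ}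
    (hFb : ∀ e ∈ G.edgeSet, ∀ v, {e' ∈ Fb e | v ∈ e'}.encard ≤ f)
    (hΔ : ∀ v, (G.neighborSet v).encard ≤ Δ) {i j k : ℕ} (hij : i < j) (hjk : j ≤ k) :
    {z : (Σ u v, G.Walk u v) × Sym2 V | z.1.2.2.length = k ∧ z.2 ∈ G.edgeSet ∧
      s(z.1.2.2.getVert i, z.1.2.2.getVert (i + 1)) ∈ Fb z.2 ∧ z.1.2.2.getVert j ∈ z.2}.encard
      ≤ ENat.card V * (Δ * (f * Δ ^ (k - 1))) := by
  rw [← Set.encard_univ]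
  refine Set.encard_le_encard_mul_of_mapsTo (Set.mapsTo_univ (fun z => z.1.2.2.getVert j) _)
    fun w _ => ?_
  refine (Set.encard_le_encard_mul_of_mapsTo (g := Prod.snd) (t := G.incidenceSet w) ?_
    fun e he => ?_).trans (by gcongr; exact encard_incidenceSet_le hΔ w)
  · rintro z ⟨⟨-, he, -, hw⟩, rfl⟩
    exact ⟨he, hw⟩
  · refine (Set.encard_le_encard ?_).trans ((Set.encard_image_le (fun x => (x, e)) _).trans
      (encard_walk_getVert_eq_edge_mem_le (hFb e he.1) hΔ hij hjk w))
    rintro ⟨x, e⟩ ⟨⟨⟨hk, -, hedge, -⟩, hw⟩, rfl⟩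
    exact ⟨x, ⟨hk, hw, hedge⟩, rfl⟩

end SimpleGraph

def chainBlockers {V : Type*} (H : SimpleGraph V) (Fb : Sym2 V → Set (Sym2 V)) {u v : V}
    (p : H.Walk u v) (i : ℕ) : Set (Sym2 V) :=
  {e ∈ H.edgeSet | s(p.getVert i, p.getVert (i + 1)) ∈ Fb e ∧
    ∃ j, i + 1 < j ∧ j ≤ p.length ∧ p.getVert j ∈ e}

def blockedWalks {V : Type*} (H : SimpleGraph V) (Fb : Sym2 V → Set (Sym2 V)) (k i m : ℕ) :
    Set (Σ u v, H.Walk u v) :=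
  {x | x.2.2.length = k ∧ m ≤ (chainBlockers H Fb x.2.2 i).ncard}

theorem exists_lt_ncard_chainBlockers_of_not_chainUnblocked {V : Type} {H : SimpleGraph V}
    {Fb : Sym2 V → Set (Sym2 V)} {b : ℝ} {u v : V} {p : H.Walk u v}
    (h : ¬ ChainUnblocked H Fb b p) : ∃ i < p.length, b < (chainBlockers H Fb p i).ncard := by
  simp only [ChainUnblocked, not_forall, not_le] at h
  obtain ⟨⟨i, hi⟩, hb⟩ := h
  refine ⟨i, by simpa using hi, hb.trans_eq ?_⟩
  unfold chainBlockers
  congr 3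
  ext e
  simp only [List.get_eq_getElem, Walk.getElem_edges, List.mem_drop_iff_getElem]
  refine and_congr_right' (and_congr_right' ⟨?_, ?_⟩)
  · rintro ⟨_, ⟨j, hj, rfl⟩, he⟩
    rw [Walk.length_support] at hj
    exact ⟨i + 2 + j, by omega, by omega, by rwa [Walk.support_getElem_eq_getVert] at he⟩
  · rintro ⟨j, hij, hjp, he⟩
    refine ⟨_, ⟨j - (i + 2), by rw [Walk.length_support]; omega, rfl⟩, ?_⟩
    rwa [Walk.support_getElem_eq_getVert, show i + 2 + (j - (i + 2)) = j by omega]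

section Counting

variable {V : Type*} [Fintype V] {H : SimpleGraph V} {Fb : Sym2 V → Set (Sym2 V)} {f Δ k : ℕ}

theorem encard_chainBlockers_pairs_le
    (hFb : ∀ e ∈ H.edgeSet, ∀ v, {e' ∈ Fb e | v ∈ e'}.encard ≤ f)
    (hΔ : ∀ v, (H.neighborSet v).encard ≤ Δ) (hk : 0 < k) (i : ℕ) :
    {z : (Σ u v, H.Walk u v) × Sym2 V |
      z.1.2.2.length = k ∧ z.2 ∈ chainBlockers H Fb z.1.2.2 i}.encard
      ≤ k * (Fintype.card V * (f * Δ ^ k)) := by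
  set P := fun j => {z : (Σ u v, H.Walk u v) × Sym2 V | z.1.2.2.length = k ∧
    z.2 ∈ H.edgeSet ∧ s(z.1.2.2.getVert i, z.1.2.2.getVert (i + 1)) ∈ Fb z.2 ∧
    z.1.2.2.getVert j ∈ z.2}
  calc _ ≤ (⋃ j ∈ Finset.Ioc (i + 1) k, P j).encard := by
        refine Set.encard_le_encard ?_
        rintro z ⟨hk, he, hedge, j, hij, hjk, hj⟩
        exact Set.mem_biUnion (Finset.mem_Ioc.2 ⟨hij, hk ▸ hjk⟩) ⟨hk, he, hedge, hj⟩
    _ ≤ ∑ j ∈ Finset.Ioc (i + 1) k, (P j).encard := Finset.set_encard_biUnion_le _ _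
    _ ≤ ∑ _j ∈ Finset.Ioc (i + 1) k, ENat.card V * (Δ * (f * Δ ^ (k - 1))) :=
        Finset.sum_le_sum fun j hj => by
          rw [Finset.mem_Ioc] at hj
          exact encard_walk_edge_mem_getVert_mem_le hFb hΔ (by omega) hj.2
    _ ≤ k * (Fintype.card V * (f * Δ ^ k)) := by
        rw [Finset.sum_const, Nat.card_Ioc, ENat.card_eq_coe_fintype_card, nsmul_eq_mul,
          mul_left_comm (Δ : ℕ∞), ← pow_succ', Nat.sub_add_cancel hk]
        gcongr
        exact_mod_cast Nat.sub_le k (i + 1)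

theorem ncard_blockedWalks_mul_le
    (hFb : ∀ e ∈ H.edgeSet, ∀ v, {e' ∈ Fb e | v ∈ e'}.encard ≤ f)
    (hΔ : ∀ v, (H.neighborSet v).encard ≤ Δ) (hk : 0 < k) (i m : ℕ) :
    (blockedWalks H Fb k i m).ncard * m ≤ k * (Fintype.card V * (f * Δ ^ k)) := by
  have hS : (blockedWalks H Fb k i m).Finite :=
    (finite_setOf_walk_length k).subset fun x hx => hx.1
  have hcount : ((blockedWalks H Fb k i m).ncard * m : ℕ∞)
      ≤ k * (Fintype.card V * (f * Δ ^ k)) :=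
    calc _ = (blockedWalks H Fb k i m).encard * m := by rw [hS.cast_ncard_eq]
      _ ≤ {z : (Σ u v, H.Walk u v) × Sym2 V |
            z.1 ∈ blockedWalks H Fb k i m ∧ z.2 ∈ chainBlockers H Fb z.1.2.2 i}.encard :=
          hS.encard_mul_le_encard_prod (E := fun x => chainBlockers H Fb x.2.2 i) fun x hx => by
            rw [← (Set.toFinite _).cast_ncard_eq]; exact_mod_cast hx.2
      _ ≤ {z : (Σ u v, H.Walk u v) × Sym2 V |
            z.1.2.2.length = k ∧ z.2 ∈ chainBlockers H Fb z.1.2.2 i}.encard :=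
          Set.encard_le_encard fun z hz => ⟨hz.1.1, hz.2⟩
      _ ≤ _ := encard_chainBlockers_pairs_le hFb hΔ hk i
  exact_mod_cast hcount

theorem ncard_blockedWalks_floor_mul_le
    (hFb : ∀ e ∈ H.edgeSet, ∀ v, {e' ∈ Fb e | v ∈ e'}.encard ≤ f)
    (hΔ : ∀ v, (H.neighborSet v).encard ≤ Δ) (hk : 0 < k) (C : ℝ) (i : ℕ) :
    ((blockedWalks H Fb k i (⌊C * f * k⌋₊ + 1)).ncard : ℝ) * C ≤ Fintype.card V * Δ ^ k := by
  have hcount := ncard_blockedWalks_mul_le hFb hΔ hk i (⌊C * f * k⌋₊ + 1)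
  generalize (blockedWalks H Fb k i (⌊C * f * k⌋₊ + 1)).ncard = N at hcount ⊢
  rcases Nat.eq_zero_or_pos f with rfl | hf
  · obtain rfl : N = 0 := by simpa using hcount
    simp only [CharP.cast_eq_zero, zero_mul]
    positivity
  · refine le_of_mul_le_mul_right ?_ (by positivity : (0 : ℝ) < f * k)
    calc (N : ℝ) * C * (f * k) = N * (C * f * k) := by ring
      _ ≤ N * (⌊C * f * k⌋₊ + 1 : ℕ) := by
          gcongr; exact_mod_cast (Nat.lt_floor_add_one _).le
      _ ≤ k * (Fintype.card V * (f * Δ ^ k)) := by exact_mod_cast hcount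
      _ = Fintype.card V * Δ ^ k * (f * k) := by ring

end Counting

/-- **chain-blocked path upper bound.** There is an absolute constant `A > 0`
such that for every `n`-vertex graph with an `f`-FD `2k`-blocking set, parameter `C ≥ 1`
and maximum degree at most `Δ`, the number of edge-simple `k`-walks that are chain-blocked
is at most `k·n·(A·Δ)^k / C`. -/
theorem chain_blocked_count :
    ∃ A : ℝ, 0 < A ∧
      ∀ (V : Type) [Fintype V], ∀ (H : SimpleGraph V) (lt : Sym2 V → Sym2 V → Prop)
        (Fb : Sym2 V → Set (Sym2 V)) (f k Δ : ℕ) (C : ℝ),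
        0 < k → IsEdgeOrder H lt → IsFDBlockingSet H lt f (2 * k) Fb → 1 ≤ C →
        (∀ v : V, (H.neighborSet v).ncard ≤ Δ) →
        ({x : (u : V) × (v : V) × H.Walk u v |
            x.2.2.length = k ∧ x.2.2.edges.Nodup ∧
            ¬ ChainUnblocked H Fb (C * f * k) x.2.2}.ncard : ℝ) ≤
          (k : ℝ) * Fintype.card V * (A * Δ) ^ k / C := by
  refine ⟨1, one_pos, fun V _ H lt Fb f k Δ C hk _ hFD hC hΔ => ?_⟩
  have hC0 : 0 < C := one_pos.trans_le hC
  have hΔ' : ∀ v, (H.neighborSet v).encard ≤ Δ := fun v => by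
    rw [← (Set.toFinite _).cast_ncard_eq]; exact_mod_cast hΔ v
  have hFb : ∀ e ∈ H.edgeSet, ∀ v, {e' ∈ Fb e | v ∈ e'}.encard ≤ f := fun e he v => by
    rw [← (Set.toFinite _).cast_ncard_eq]; exact_mod_cast hFD.2.1 e he v
  set T := fun i => blockedWalks H Fb k i (⌊C * f * k⌋₊ + 1)
  have hcover : {x : Σ u v, H.Walk u v | x.2.2.length = k ∧ x.2.2.edges.Nodup ∧
      ¬ ChainUnblocked H Fb (C * f * k) x.2.2} ⊆ ⋃ i ∈ Finset.range k, T i := by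
    rintro x ⟨hlen, -, hblocked⟩
    obtain ⟨i, hi, hb⟩ := exists_lt_ncard_chainBlockers_of_not_chainUnblocked hblocked
    exact Set.mem_biUnion (Finset.mem_range.2 (hlen ▸ hi))
      ⟨hlen, Nat.succ_le_of_lt ((Nat.floor_lt (by positivity)).2 hb)⟩
  have hfin : (⋃ i ∈ Finset.range k, T i).Finite :=
    (finite_setOf_walk_length k).subset (Set.iUnion₂_subset fun i _ x hx => hx.1)
  calc _ ≤ ∑ i ∈ Finset.range k, ((T i).ncard : ℝ) := by
        exact_mod_cast (Set.ncard_le_ncard hcover hfin).trans (Finset.set_ncard_biUnion_le _ _)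
    _ ≤ ∑ _i ∈ Finset.range k, Fintype.card V * (Δ : ℝ) ^ k / C := Finset.sum_le_sum fun i _ =>
        (le_div_iff₀ hC0).2 (ncard_blockedWalks_floor_mul_le hFb hΔ' hk C i)
    _ = _ := by rw [Finset.sum_const, Finset.card_range, nsmul_eq_mul, one_mul]; ring
end
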